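/- Let Θ be a finite nonempty set, Φ : Δ_Θ → ℝ a differentiable entropy, and define the loss λ^Φ(μ) := Φ*(∇Φ(μ))·𝟏 − ∇Φ(μ) ∈ ℝ^Θ. Then for all μ ∈ Δ_Θ and all μ' in the relative interior of Δ_Θ: ⟨μ, λ^Φ(μ')⟩ − ⟨μ, λ^Φ(μ)⟩ = D_Φ(μ, μ'). -/

import Mathlib

open Finset

/-- The probability simplex over a finite set `Θ`. -/
def probSimplex (Θ : Type*) [Fintype Θ] : Set (Θ → ℝ) :=
  {μ | (∀ θ, 0 ≤ μ θ) ∧ ∑ θ, μ θ = 1}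

/-- The relative interior of the probability simplex. -/
def probSimplexRI (Θ : Type*) [Fintype Θ] : Set (Θ → ℝ) :=
  {μ | (∀ θ, 0 < μ θ) ∧ ∑ θ, μ θ = 1}

/-- Standard inner product on `ℝ^Θ`. -/
noncomputable def ip {Θ : Type*} [Fintype Θ] (v w : Θ → ℝ) : ℝ := ∑ θ, v θ * w θ

/-- Convex conjugate of a function on the probability simplex:
`Φ*(v) = sup_{μ ∈ Δ_Θ} ⟨μ, v⟩ − Φ(μ)`. -/
noncomputable def conjF {Θ : Type*} [Fintype Θ] (Φ : (Θ → ℝ) → ℝ) (v : Θ → ℝ) : ℝ :=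
  sSup ((fun μ => ip μ v - Φ μ) '' probSimplex Θ)

/-- The continuous linear functional `w ↦ ⟨g, w⟩` associated with a vector `g : Θ → ℝ`;
used to express that `g` is a gradient. -/
noncomputable def toCLM {Θ : Type*} [Fintype Θ] (g : Θ → ℝ) : (Θ → ℝ) →L[ℝ] ℝ :=
  ∑ θ, g θ • (ContinuousLinearMap.proj θ : (Θ → ℝ) →L[ℝ] ℝ)

/-- Bregman divergence `D_Φ(μ', μ) = Φ(μ') − Φ(μ) − ⟨∇Φ(μ), μ' − μ⟩`, where the
gradient of `Φ` is given by `g`. -/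
noncomputable def bregDiv {Θ : Type*} [Fintype Θ] (Φ : (Θ → ℝ) → ℝ)
    (g : (Θ → ℝ) → Θ → ℝ) (μ' μ : Θ → ℝ) : ℝ :=
  Φ μ' - Φ μ - ip (g μ) (fun θ => μ' θ - μ θ)

/-- The proper loss `λ^Φ(μ) = Φ*(∇Φ(μ))·𝟏 − ∇Φ(μ)` associated with entropy `Φ`
with gradient `g`. -/
noncomputable def lamLoss {Θ : Type*} [Fintype Θ] (Φ : (Θ → ℝ) → ℝ)
    (g : (Θ → ℝ) → Θ → ℝ) (μ : Θ → ℝ) : Θ → ℝ :=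
  fun θ => conjF Φ (g μ) - g μ θ

/-- Negative Shannon entropy `(−H)(μ) = ∑ θ, μ(θ) log μ(θ)` (with `0 log 0 = 0`,
since `Real.log 0 = 0`). -/
noncomputable def negH {Θ : Type*} [Fintype Θ] (μ : Θ → ℝ) : ℝ :=
  ∑ θ, μ θ * Real.log (μ θ)

/- Since `μ` sums to one, the constant part `Φ*(∇Φ ν)·𝟏` of `λ^Φ(ν)` contributes exactly
`Φ*(∇Φ ν)` to `⟨μ, λ^Φ(ν)⟩`, and Fenchel–Young turns this into `⟨ν, ∇Φ ν⟩ − Φ ν`. So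
`⟨μ, λ^Φ(ν)⟩ = −(Φ ν + ⟨∇Φ ν, μ − ν⟩)` is minus the tangent of `Φ` at `ν`, evaluated at `μ`;
on the diagonal it is `−Φ μ`, and the difference of the two is the Bregman divergence. -/

theorem probSimplexRI_subset_probSimplex (Θ : Type*) [Fintype Θ] :
    probSimplexRI Θ ⊆ probSimplex Θ :=
  fun _ hμ => ⟨fun θ => (hμ.1 θ).le, hμ.2⟩

theorem ip_comm {Θ : Type*} [Fintype Θ] (v w : Θ → ℝ) : ip v w = ip w v := by
  simp only [ip, mul_comm]

theorem ip_sub_right {Θ : Type*} [Fintype Θ] (u v w : Θ → ℝ) :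
    ip u (fun θ => v θ - w θ) = ip u v - ip u w := by
  simp only [ip, mul_sub, sum_sub_distrib]

theorem ip_const_sub_of_sum_eq_one {Θ : Type*} [Fintype Θ] {μ : Θ → ℝ}
    (hμ : ∑ θ, μ θ = 1) (c : ℝ) (v : Θ → ℝ) :
    ip μ (fun θ => c - v θ) = c - ip μ v := by
  rw [ip_sub_right]
  simp only [ip, ← sum_mul, hμ, one_mul]

theorem ip_lamLoss_of_fenchelYoung {Θ : Type*} [Fintype Θ]
    {Φ : (Θ → ℝ) → ℝ} {g : (Θ → ℝ) → Θ → ℝ} {μ ν : Θ → ℝ} (hμ : ∑ θ, μ θ = 1)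
    (hFY : conjF Φ (g ν) = ip ν (g ν) - Φ ν) :
    ip μ (lamLoss Φ g ν) = ip ν (g ν) - Φ ν - ip μ (g ν) := by
  rw [← hFY]
  exact ip_const_sub_of_sum_eq_one hμ _ _

theorem ip_lamLoss_self_of_fenchelYoung {Θ : Type*} [Fintype Θ]
    {Φ : (Θ → ℝ) → ℝ} {g : (Θ → ℝ) → Θ → ℝ} {μ : Θ → ℝ} (hμ : ∑ θ, μ θ = 1)
    (hFY : conjF Φ (g μ) = ip μ (g μ) - Φ μ) :
    ip μ (lamLoss Φ g μ) = -Φ μ := by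
  rw [ip_lamLoss_of_fenchelYoung hμ hFY]
  ring

theorem lamLoss_regret_eq_bregDiv_general {Θ : Type*} [Fintype Θ]
    (Φ : (Θ → ℝ) → ℝ) (gradΦ : (Θ → ℝ) → Θ → ℝ)
    (hFY : ∀ μ ∈ probSimplex Θ, conjF Φ (gradΦ μ) = ip μ (gradΦ μ) - Φ μ)
    (μ : Θ → ℝ) (hμ : μ ∈ probSimplex Θ)
    (μ' : Θ → ℝ) (hμ' : μ' ∈ probSimplexRI Θ) :
    ip μ (lamLoss Φ gradΦ μ') - ip μ (lamLoss Φ gradΦ μ)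
      = bregDiv Φ gradΦ μ μ' := by
  rw [ip_lamLoss_of_fenchelYoung hμ.2 (hFY μ' (probSimplexRI_subset_probSimplex Θ hμ')),
    ip_lamLoss_self_of_fenchelYoung hμ.2 (hFY μ hμ), bregDiv, ip_sub_right,
    ip_comm (gradΦ μ') μ, ip_comm (gradΦ μ') μ']
  ring

/-- proof of Lemma 3 of the paper: For a differentiable entropy `Φ`
satisfying the Fenchel–Young equality, the loss `λ^Φ(μ) = Φ*(∇Φ(μ))·𝟏 − ∇Φ(μ)`
satisfies `⟨μ, λ^Φ(μ')⟩ − ⟨μ, λ^Φ(μ)⟩ = D_Φ(μ, μ')`. -/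
theorem lamLoss_regret_eq_bregDiv {Θ : Type*} [Fintype Θ] [Nonempty Θ]
    (Φ : (Θ → ℝ) → ℝ) (gradΦ : (Θ → ℝ) → Θ → ℝ)
    (hconv : ConvexOn ℝ (probSimplex Θ) Φ)
    (hlsc : LowerSemicontinuousOn Φ (probSimplex Θ))
    (hdiff : ∀ μ ∈ probSimplexRI Θ,
      HasFDerivWithinAt Φ (toCLM (gradΦ μ)) (probSimplex Θ) μ)
    (hFY : ∀ μ ∈ probSimplex Θ, conjF Φ (gradΦ μ) = ip μ (gradΦ μ) - Φ μ)
    (μ : Θ → ℝ) (hμ : μ ∈ probSimplex Θ)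
    (μ' : Θ → ℝ) (hμ' : μ' ∈ probSimplexRI Θ) :
    ip μ (lamLoss Φ gradΦ μ') - ip μ (lamLoss Φ gradΦ μ)
      = bregDiv Φ gradΦ μ μ' :=
  lamLoss_regret_eq_bregDiv_general Φ gradΦ hFY μ hμ μ' hμ'
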